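/- arXiv:2007.01244 — 2 statements merged into one kernel-verified Lean document; each statement's English description precedes it below -/
import Mathlib

section
/- Let $\mathfrak{g}$ be a finite-dimensional Lie algebra, $x\in\mathfrak{g}$ with $\mathrm{ad}\,x$ semisimple, and $n\in\mathfrak{g}$ with $[x,n]=0$ and $\mathrm{ad}\,n$ nilpotent. Set $\mathfrak{h}=\ker(\mathrm{ad}\,x)$ and $\mathfrak{h}^\perp=\mathrm{im}(\mathrm{ad}\,x)$. Then for every $A\in\mathfrak{g}$ there exist unique $h\in\mathfrak{h}$ and $U\in\mathfrak{h}^\perp$ such that $h+[x+n,U]=A$. -/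
/-!
Semisimplicity of `ad x` splits `𝔤` as `ker (ad x) ⊕ im (ad x)`, and `ad x` is invertible on
`im (ad x)`. There `ad n` is a nilpotent endomorphism commuting with `ad x`, so
`ad (x + n) = ad x + ad n` is still invertible on `im (ad x)`; existence and uniqueness of
`A = h + [x + n, U]` then come from the direct sum decomposition.
-/

open LinearMap

lemma LinearMap.restrict_add {R M : Type*} [Semiring R] [AddCommMonoid M] [Module R M]
    {f g : Module.End R M} {p : Submodule R M} (hf : Set.MapsTo f p p) (hg : Set.MapsTo g p p) :
    (f + g).restrict (fun _ hv ↦ p.add_mem (hf hv) (hg hv)) = f.restrict hf + g.restrict hg :=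
  rfl

namespace Module.End

section CommRing

variable {R M : Type*} [CommRing R] [AddCommGroup M] [Module R M] {f g : End R M}

lemma mapsTo_range_of_commute (h : Commute f g) : Set.MapsTo g (range f) (range f) := by
  rintro _ ⟨u, rfl⟩
  exact ⟨g u, congr($h u)⟩

/- `ker f` has an `f`-invariant complement `q`, and `range f = f q ⊆ q`. -/
lemma IsSemisimple.disjoint_ker_range (hf : f.IsSemisimple) : Disjoint (ker f) (range f) := by
  obtain ⟨q, hq, hcompl⟩ := isSemisimple_iff.mp hf (ker f) (fun v hv ↦ by simp_all)
  refine hcompl.disjoint.mono_right ?_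
  rintro _ ⟨u, rfl⟩
  obtain ⟨k, hk, w, hw, rfl⟩ :=
    Submodule.mem_sup.mp (hcompl.sup_eq_top ▸ Submodule.mem_top : u ∈ ker f ⊔ q)
  rw [map_add, mem_ker.mp hk, zero_add]
  exact hq hw

end CommRing

section Field

variable {K V : Type*} [Field K] [AddCommGroup V] [Module K V] [FiniteDimensional K V]
  {f g : End K V}

lemma IsSemisimple.isCompl_ker_range (hf : f.IsSemisimple) : IsCompl (ker f) (range f) :=
  (Submodule.isCompl_iff_disjoint _ _
    (by rw [add_comm]; exact (finrank_range_add_finrank_ker f).ge)).mpr hf.disjoint_ker_range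

lemma isUnit_restrict_range_of_disjoint (h : Disjoint (ker f) (range f)) :
    IsUnit (f.restrict (mapsTo_range_of_commute (Commute.refl f))) := by
  have hinj : Function.Injective (f.restrict (mapsTo_range_of_commute (Commute.refl f))) := by
    rw [← ker_eq_bot, Submodule.eq_bot_iff]
    rintro ⟨v, hv⟩ hfv
    exact Subtype.ext (Submodule.disjoint_def.mp h v (congr_arg Subtype.val hfv) hv)
  exact (isUnit_iff _).mpr ⟨hinj, injective_iff_surjective.mp hinj⟩

lemma IsSemisimple.isUnit_add_restrict_range (hf : f.IsSemisimple) (hg : IsNilpotent g)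
    (hfg : Commute f g) :
    IsUnit ((f + g).restrict (mapsTo_range_of_commute ((Commute.refl f).add_right hfg))) := by
  have hf' := mapsTo_range_of_commute (Commute.refl f)
  have hg' := mapsTo_range_of_commute hfg
  rw [restrict_add hf' hg']
  exact (isNilpotent.restrict hg' hg).isUnit_add_left_of_commute
    (isUnit_restrict_range_of_disjoint hf.disjoint_ker_range) (restrict_commute hfg hf' hg').symm

end Field

end Module.End

lemma Submodule.existsUnique_add_apply_of_isCompl {R M : Type*} [Ring R] [AddCommGroup M]
    [Module R M] {p q : Submodule R M} (hpq : IsCompl p q) {φ : Module.End R M}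
    (hφ : Set.MapsTo φ q q) (hbij : Function.Bijective (φ.restrict hφ)) (A : M) :
    ∃! u : M × M, u.1 ∈ p ∧ u.2 ∈ q ∧ u.1 + φ u.2 = A := by
  obtain ⟨a, b, rfl, huniq⟩ := p.existsUnique_add_of_isCompl hpq A
  obtain ⟨U, hU⟩ := hbij.2 b
  refine ⟨(a, U), ⟨a.2, U.2, by rw [← coe_restrict_apply hφ, hU]⟩, ?_⟩
  rintro ⟨h, V⟩ ⟨hh, hV, hsum⟩
  obtain ⟨rfl, hb⟩ := huniq ⟨h, hh⟩ ⟨φ V, hφ hV⟩ hsum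
  have : φ.restrict hφ ⟨V, hV⟩ = φ.restrict hφ U := by rw [hU, ← hb]; rfl
  rw [← hbij.1 this]

lemma LieAlgebra.commute_ad_of_lie_eq_zero {R L : Type*} [CommRing R] [LieRing L]
    [LieAlgebra R L] {x y : L} (h : ⁅x, y⁆ = 0) : Commute (ad R L x) (ad R L y) := by
  ext z
  simp [leibniz_lie x y z, h]

/-- Key decomposition lemma.  With `ad x` semisimple, `[x,n] = 0` and
`ad n` nilpotent, every `A ∈ 𝔤` decomposes uniquely as `A = h + [x + n, U]` with
`h ∈ ker (ad x)` and `U ∈ im (ad x)`. -/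
theorem stmt_5 {F L : Type*} [Field F] [LieRing L] [LieAlgebra F L]
    [FiniteDimensional F L]
    (x n : L) (hcomm : ⁅x, n⁆ = 0)
    (hss : (LieAlgebra.ad F L x).IsSemisimple)
    (hnil : IsNilpotent (LieAlgebra.ad F L n)) :
    ∀ A : L, ∃! p : L × L,
      p.1 ∈ LinearMap.ker (LieAlgebra.ad F L x) ∧
      p.2 ∈ LinearMap.range (LieAlgebra.ad F L x) ∧
      p.1 + ⁅x + n, p.2⁆ = A := by
  have hunit := hss.isUnit_add_restrict_range hnil (LieAlgebra.commute_ad_of_lie_eq_zero hcomm)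
  simpa only [LinearMap.add_apply, LieAlgebra.ad_apply, ← add_lie] using
    Submodule.existsUnique_add_apply_of_isCompl hss.isCompl_ker_range _
      ((Module.End.isUnit_iff _).mp hunit)
end

section
/- Let $\mathfrak{g}$ be a finite-dimensional Lie algebra with a nondegenerate symmetric invariant bilinear form $(\cdot|\cdot)$, let $(e,h,f)$ be an $\mathfrak{sl}_2$-triple, and let $\mathfrak{g}_{\frac12}$ be the $\mathrm{ad}\,\frac{h}{2}$-eigenspace with eigenvalue $\frac12$. Then the bilinear form $\omega(a,b)=(f|[a,b])$ on $\mathfrak{g}_{\frac12}$ is skew-symmetric and nondegenerate. -/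
/-!
Skew-symmetry is `lie_skew`. For nondegeneracy, let `a ∈ 𝔤_{1/2}` be `ω`-orthogonal to
`𝔤_{1/2}` and put `x = ⁅f, a⁆`. By invariance `B x` vanishes on `ker (ad h - 1) = 𝔤_{1/2}`
and, since `⁅x, h⁆ = x`, also on `range (ad h - 1)`. In a finite-dimensional `sl₂`-module `h`
has no Jordan chains of length two, so these two subspaces span `𝔤` and `x = 0`. If `a ≠ 0`,
it would be a lowest weight vector of weight `1`, but lowest weights are nonpositive integers.
-/

open LieModule Module

lemma Module.End.exists_eq_zero_of_apply_eq_smul {K M : Type*} [Field K] [AddCommGroup M]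
    [Module K M] [FiniteDimensional K M] (T : End K M) {μ : ℕ → K}
    (hμ : Function.Injective μ) {v : ℕ → M} (hv : ∀ k, T (v k) = μ k • v k) :
    ∃ k, v k = 0 := by
  by_contra! hv0
  have := (T.eigenvectors_linearIndependent' μ hμ v
    fun k ↦ ⟨End.mem_eigenspace_iff.mpr (hv k), hv0 k⟩).finite
  exact not_finite ℕ

namespace IsSl2Triple

variable {K L M : Type*} [Field K] [LieRing L] [LieAlgebra K L]
  [AddCommGroup M] [Module K M] [LieRingModule L M] [LieModule K L M] {h e f : L}

lemma of_lie_smul (hh : h ≠ 0) (hhe : ⁅h, e⁆ = (2 : K) • e)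
    (hhf : ⁅h, f⁆ = (-2 : K) • f) (hef : ⁅e, f⁆ = h) : IsSl2Triple h e f where
  h_ne_zero := hh
  lie_e_f := hef
  lie_h_e_nsmul := by rw [hhe, two_smul, two_nsmul]
  lie_h_f_nsmul := by rw [hhf, two_nsmul]; module

variable (t : IsSl2Triple h e f) {μ : K} {z w : M}
include t

lemma lie_h_pow_toEnd_e_of_lie_h_eq_smul_add (hw : ⁅h, w⁆ = μ • w + z) (k : ℕ) :
    ⁅h, (toEnd K L M e ^ k) w⁆ =
      (μ + 2 * k) • (toEnd K L M e ^ k) w + (toEnd K L M e ^ k) z := by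
  induction k with
  | zero => simpa using hw
  | succ k ih =>
    simp only [pow_succ', End.mul_apply, toEnd_apply_apply]
    rw [leibniz_lie h, t.lie_h_e_smul K, smul_lie, ih, lie_add, lie_smul]
    push_cast
    module

lemma lie_h_pow_toEnd_f_of_lie_h_eq_smul_add (hw : ⁅h, w⁆ = μ • w + z) (k : ℕ) :
    ⁅h, (toEnd K L M f ^ k) w⁆ =
      (μ - 2 * k) • (toEnd K L M f ^ k) w + (toEnd K L M f ^ k) z := by
  have := t.symm.lie_h_pow_toEnd_e_of_lie_h_eq_smul_add (μ := -μ) (z := -z)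
    (by rw [neg_lie, hw]; module) k
  rw [neg_lie, map_neg, neg_eq_iff_eq_neg] at this
  rw [this]
  module

lemma lie_e_pow_succ_toEnd_f_of_lie_e_eq_zero (hw : ⁅h, w⁆ = μ • w + z) (he : ⁅e, w⁆ = 0)
    (i : ℕ) :
    ⁅e, (toEnd K L M f ^ (i + 1)) w⁆ =
      ((i + 1) * (μ - i)) • (toEnd K L M f ^ i) w + ((i : K) + 1) • (toEnd K L M f ^ i) z := by
  induction i with
  | zero => simp [leibniz_lie e f, t.lie_e_f, he, hw]
  | succ i ih =>
    have hf : ∀ (j : ℕ) (x : M), (toEnd K L M f ^ (j + 1)) x = ⁅f, (toEnd K L M f ^ j) x⁆ :=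
      fun j x ↦ by rw [pow_succ', End.mul_apply, toEnd_apply_apply]
    rw [hf, leibniz_lie e f, t.lie_e_f, t.lie_h_pow_toEnd_f_of_lie_h_eq_smul_add hw, ih, lie_add,
      lie_smul, lie_smul, ← hf, ← hf]
    push_cast
    module

omit t in
lemma HasPrimitiveVectorWith.pow_toEnd_e_pow_toEnd_f {t : IsSl2Triple h e f} {m : M}
    (P : t.HasPrimitiveVectorWith m μ) (j : ℕ) :
    (toEnd K L M e ^ j) ((toEnd K L M f ^ j) m) =
      (∏ i ∈ Finset.range j, ((i + 1) * (μ - i))) • m := by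
  induction j with
  | zero => simp
  | succ j ih =>
    rw [pow_succ (toEnd K L M e), End.mul_apply, toEnd_apply_apply, P.lie_e_pow_succ_toEnd_f,
      map_smul, ih, smul_smul, Finset.prod_range_succ, mul_comm]

variable [FiniteDimensional K M] [CharZero K]

/-- Here `z` is primitive, of some weight `n`, and the vectors `f ^ (n + 1 + i) w` are
`h`-eigenvectors. Since `e` maps each of them to a nonzero multiple of the previous one and
`⁅e, f ^ (n + 1) w⁆` is a nonzero multiple of `f ^ n z ≠ 0`, none of them vanishes, which is
impossible in finite dimension. -/
lemma eq_zero_of_lie_h_eq_smul_add_of_lie_e_eq_zero (hz : ⁅h, z⁆ = μ • z)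
    (hw : ⁅h, w⁆ = μ • w + z) (he : ⁅e, w⁆ = 0) : z = 0 := by
  by_contra hz0
  have hez : ⁅e, z⁆ = 0 := by
    have := leibniz_lie e h w
    rwa [hw, he, lie_zero, add_zero, ← lie_skew, t.lie_h_e_smul K, neg_lie, smul_lie, he,
      smul_zero, neg_zero, lie_add, lie_smul, he, smul_zero, zero_add] at this
  have P : t.HasPrimitiveVectorWith z μ := ⟨hz0, hz, hez⟩
  obtain ⟨n, rfl⟩ := P.exists_nat
  have hfz (i : ℕ) : (toEnd K L M f ^ (n + 1 + i)) z = 0 := by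
    rw [add_comm, pow_add, End.mul_apply, P.pow_toEnd_f_eq_zero_of_eq_nat rfl, map_zero]
  have hfw_eig (i : ℕ) : ⁅h, (toEnd K L M f ^ (n + 1 + i)) w⁆ =
      ((n : K) - 2 * (n + 1 + i : ℕ)) • (toEnd K L M f ^ (n + 1 + i)) w := by
    rw [t.lie_h_pow_toEnd_f_of_lie_h_eq_smul_add hw, hfz, add_zero]
  have hfw_desc (i : ℕ) (hi : (toEnd K L M f ^ (n + 1 + i + 1)) w = 0) :
      (toEnd K L M f ^ (n + 1 + i)) w = 0 := by
    have := t.lie_e_pow_succ_toEnd_f_of_lie_e_eq_zero hw he (n + 1 + i)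
    rw [hi, lie_zero, hfz, smul_zero, add_zero, eq_comm, smul_eq_zero] at this
    refine this.resolve_left (mul_ne_zero (Nat.cast_add_one_ne_zero _) (sub_ne_zero.mpr ?_))
    exact_mod_cast (by omega : n ≠ n + 1 + i)
  have hfw_ne : (toEnd K L M f ^ (n + 1)) w ≠ 0 := by
    intro hfw
    have := t.lie_e_pow_succ_toEnd_f_of_lie_e_eq_zero hw he n
    rw [hfw, lie_zero, sub_self, mul_zero, zero_smul, zero_add, eq_comm, smul_eq_zero] at this
    exact this.elim (Nat.cast_add_one_ne_zero n) (P.pow_toEnd_f_ne_zero_of_eq_nat rfl le_rfl)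
  obtain ⟨j, hj⟩ := (toEnd K L M h).exists_eq_zero_of_apply_eq_smul
    (μ := fun i ↦ (n : K) - 2 * (n + 1 + i : ℕ)) (fun i i' hii' ↦ by simpa using hii')
    hfw_eig
  induction j with
  | zero => exact hfw_ne hj
  | succ j ih => exact ih (hfw_desc j hj)

lemma exists_pow_toEnd_e_eq_zero (hz : ⁅h, z⁆ = μ • z) (hw : ⁅h, w⁆ = μ • w + z) :
    ∃ N, (toEnd K L M e ^ N) w = 0 := by
  have hinj : ∀ k₀ : ℕ, Function.Injective fun k : ℕ ↦ μ + 2 * (k + k₀ : ℕ) :=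
    fun k₀ k k' hkk' ↦ by simpa using hkk'
  obtain ⟨k₀, hk₀⟩ := (toEnd K L M h).exists_eq_zero_of_apply_eq_smul
    (by simpa using hinj 0) (v := fun k ↦ (toEnd K L M e ^ k) z) (t.lie_h_pow_toEnd_e hz)
  have hez : ∀ k, (toEnd K L M e ^ (k + k₀)) z = 0 := fun k ↦ by
    rw [pow_add, End.mul_apply, hk₀, map_zero]
  obtain ⟨k, hk⟩ := (toEnd K L M h).exists_eq_zero_of_apply_eq_smul (hinj k₀)
    (v := fun k ↦ (toEnd K L M e ^ (k + k₀)) w)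
    fun k ↦ by
      rw [toEnd_apply_apply, t.lie_h_pow_toEnd_e_of_lie_h_eq_smul_add hw, hez, add_zero]
  exact ⟨_, hk⟩

/-- Induction on `N` with `e ^ N w = 0`. The induction hypothesis applied to `(e w, e z)` gives
`⁅e, z⁆ = 0`; then `p = e ^ N w` is primitive, and replacing `w` by `w - c⁻¹ • f ^ N p`,
where `e ^ N f ^ N p = c • p`, lowers `N` without changing `z`. -/
lemma eq_zero_of_lie_h_eq_smul_add (hz : ⁅h, z⁆ = μ • z) (hw : ⁅h, w⁆ = μ • w + z) :
    z = 0 := by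
  obtain ⟨N, hN⟩ := t.exists_pow_toEnd_e_eq_zero hz hw
  induction N generalizing μ z w with
  | zero => simpa [show w = 0 from hN] using hw.symm
  | succ N ih =>
    have hez : ⁅e, z⁆ = 0 := ih (by simpa using t.lie_h_pow_toEnd_e hz 1)
      (by simpa using t.lie_h_pow_toEnd_e_of_lie_h_eq_smul_add hw 1)
      (by rwa [pow_succ, End.mul_apply, toEnd_apply_apply] at hN)
    rcases N with _ | N
    · exact t.eq_zero_of_lie_h_eq_smul_add_of_lie_e_eq_zero hz hw (by simpa using hN)
    by_contra hz0
    obtain ⟨n, rfl⟩ := (⟨hz0, hz, hez⟩ : t.HasPrimitiveVectorWith z μ).exists_nat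
    set p := (toEnd K L M e ^ (N + 1)) w
    by_cases hp0 : p = 0
    · exact hz0 (ih hz hw hp0)
    have P : t.HasPrimitiveVectorWith p ((n + 2 * (N + 1) : ℕ) : K) := by
      refine ⟨hp0, ?_, by rwa [pow_succ', End.mul_apply] at hN⟩
      have hEz : (toEnd K L M e ^ (N + 1)) z = 0 := by
        rw [pow_succ, End.mul_apply, toEnd_apply_apply, hez, map_zero]
      rw [t.lie_h_pow_toEnd_e_of_lie_h_eq_smul_add hw, hEz, add_zero]
      push_cast
      rfl
    set c := ∏ i ∈ Finset.range (N + 1), ((i + 1) * (((n + 2 * (N + 1) : ℕ) : K) - i))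
    have hc : c ≠ 0 := Finset.prod_ne_zero_iff.mpr fun i hi ↦ by
      rw [Finset.mem_range] at hi
      exact mul_ne_zero (Nat.cast_add_one_ne_zero i)
        (sub_ne_zero.mpr (by exact_mod_cast (by omega : n + 2 * (N + 1) ≠ i)))
    refine hz0 (ih (w := w - c⁻¹ • (toEnd K L M f ^ (N + 1)) p) hz ?_ ?_)
    · rw [lie_sub, lie_smul, P.lie_h_pow_toEnd_f, hw]
      push_cast
      module
    · rw [map_sub, map_smul, P.pow_toEnd_e_pow_toEnd_f, smul_smul, inv_mul_cancel₀ hc, one_smul,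
        sub_self]

lemma isCompl_ker_range_toEnd_h_sub (μ : K) :
    IsCompl (LinearMap.ker (toEnd K L M h - algebraMap K (End K M) μ))
      (LinearMap.range (toEnd K L M h - algebraMap K (End K M) μ)) := by
  refine (Submodule.isCompl_iff_disjoint _ _ ?_).mpr ?_
  · rw [add_comm, LinearMap.finrank_range_add_finrank_ker]
  rw [Submodule.disjoint_def]
  rintro _ hz ⟨w, rfl⟩
  refine t.eq_zero_of_lie_h_eq_smul_add (μ := μ) (w := w) ?_ ?_
  · simpa [sub_eq_zero] using hz
  · simp

lemma exists_nat_of_lie_f_eq_zero {m : M} (hm : m ≠ 0) (hmh : ⁅h, m⁆ = μ • m)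
    (hmf : ⁅f, m⁆ = 0) : ∃ n : ℕ, μ = -n := by
  obtain ⟨n, hn⟩ := (⟨hm, by rw [neg_lie, hmh, neg_smul], hmf⟩ :
    t.symm.HasPrimitiveVectorWith m (-μ)).exists_nat
  exact ⟨n, by rw [← hn, neg_neg]⟩

end IsSl2Triple

theorem stmt_7_general {F L : Type*} [Field F] [CharZero F]
    [LieRing L] [LieAlgebra F L] [FiniteDimensional F L]
    (B : L →ₗ[F] L →ₗ[F] F)
    (hinv : ∀ a b c : L, B ⁅a, b⁆ c = B a ⁅b, c⁆)
    (hnondeg : ∀ a : L, (∀ b : L, B a b = 0) → a = 0)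
    (e h f : L)
    (hhe : ⁅h, e⁆ = (2 : F) • e) (hhf : ⁅h, f⁆ = (-2 : F) • f) (hef : ⁅e, f⁆ = h) :
    (∀ a ∈ Module.End.eigenspace (LieAlgebra.ad F L h) 1,
      ∀ b ∈ Module.End.eigenspace (LieAlgebra.ad F L h) 1,
        B f ⁅a, b⁆ = - B f ⁅b, a⁆) ∧
    (∀ a ∈ Module.End.eigenspace (LieAlgebra.ad F L h) 1,
      (∀ b ∈ Module.End.eigenspace (LieAlgebra.ad F L h) 1, B f ⁅a, b⁆ = 0) → a = 0) := by
  have mem_eig (x : L) : x ∈ End.eigenspace (LieAlgebra.ad F L h) 1 ↔ ⁅h, x⁆ = x := by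
    rw [End.mem_eigenspace_iff, LieAlgebra.ad_apply, one_smul]
  refine ⟨fun a _ b _ ↦ by rw [← lie_skew, map_neg], fun a ha hab ↦ ?_⟩
  rw [mem_eig] at ha
  rcases eq_or_ne h 0 with rfl | hh
  · simpa using ha.symm
  have t : IsSl2Triple h e f := .of_lie_smul hh hhe hhf hef
  have hfa : ⁅⁅f, a⁆, h⁆ = ⁅f, a⁆ := by
    rw [← lie_skew, leibniz_lie, hhf, ha, smul_lie]
    module
  have hle : ⊤ ≤ LinearMap.ker (B ⁅f, a⁆) := by
    rw [← (t.isCompl_ker_range_toEnd_h_sub (M := L) (1 : F)).sup_eq_top]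
    refine sup_le (fun y hy ↦ ?_) ?_
    · rw [LinearMap.mem_ker, hinv]
      exact hab y ((mem_eig y).mpr (by simpa [sub_eq_zero] using hy))
    · rintro _ ⟨y, rfl⟩
      simp [← hinv, hfa]
  have hfa0 : ⁅f, a⁆ = 0 := hnondeg _ fun b ↦ hle Submodule.mem_top
  by_contra ha0
  obtain ⟨n, hn⟩ := t.exists_nat_of_lie_f_eq_zero (μ := (1 : F)) ha0 (by rwa [one_smul]) hfa0
  exact Nat.cast_add_one_ne_zero (R := F) n (by linear_combination hn)

/-- For an `sl₂`-triple `(e,h,f)` and a nondegenerate symmetric invariant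
bilinear form `B` on a finite-dimensional Lie algebra, the form
`ω(a,b) = B f ⁅a,b⁆` on `𝔤_{1/2}` (the `ad h`-eigenspace with eigenvalue `1`) is
skew-symmetric and nondegenerate. -/
theorem stmt_7 {F L : Type*} [Field F] [CharZero F]
    [LieRing L] [LieAlgebra F L] [FiniteDimensional F L]
    (B : L →ₗ[F] L →ₗ[F] F)
    (hsymm : ∀ a b : L, B a b = B b a)
    (hinv : ∀ a b c : L, B ⁅a, b⁆ c = B a ⁅b, c⁆)
    (hnondeg : ∀ a : L, (∀ b : L, B a b = 0) → a = 0)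
    (e h f : L)
    (hhe : ⁅h, e⁆ = (2 : F) • e) (hhf : ⁅h, f⁆ = (-2 : F) • f) (hef : ⁅e, f⁆ = h) :
    (∀ a ∈ Module.End.eigenspace (LieAlgebra.ad F L h) 1,
      ∀ b ∈ Module.End.eigenspace (LieAlgebra.ad F L h) 1,
        B f ⁅a, b⁆ = - B f ⁅b, a⁆) ∧
    (∀ a ∈ Module.End.eigenspace (LieAlgebra.ad F L h) 1,
      (∀ b ∈ Module.End.eigenspace (LieAlgebra.ad F L h) 1, B f ⁅a, b⁆ = 0) → a = 0) :=
  stmt_7_general B hinv hnondeg e h f hhe hhf hef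
end
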